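/- Under the frame setup with two distinguished coordinate indices 1, 2, one has the pointwise identity for the topological charge density: ⟨S, ∂₁ S × ∂₂ S⟩ = Im( ψ₂ · conj(ψ₁) ) = ∂₂ A₁ − ∂₁ A₂. -/

import Mathlib

/-!
Since `|S| = 1`, every `∂ₘS` is orthogonal to `S`, and `ψₘ` records its components along `v`
and `w`. As `S = v × w`, the Binet–Cauchy identity turns `⟨S, ∂₁S × ∂₂S⟩` into the
`2 × 2` determinant of these components, which is `Im (ψ₂ conj ψ₁)`.

For the curvature, symmetry of second derivatives reduces `∂₂A₁ − ∂₁A₂` to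
`⟨∂₂w, ∂₁v⟩ − ⟨∂₁w, ∂₂v⟩`, where `∂w = ∂S × v + S × ∂v`. Differentiating the constraints
`|S| = |v| = 1`, `⟨S, v⟩ = 0` shows that `∂S × v` is parallel to `S` and that `S`, `∂₁v`, `∂₂v`
all lie in the plane `v^⊥`; hence `⟨∂₂w, ∂₁v⟩ = ⟨v, ∂₁S⟩⟨w, ∂₂S⟩`, and symmetrically.
-/

open Matrix

/-- Partial derivative of `f` in the `α`-th coordinate direction. -/
noncomputable def pd {n : ℕ} {E : Type*} [NormedAddCommGroup E] [NormedSpace ℝ E]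
    (f : (Fin n → ℝ) → E) (α : Fin n) (p : Fin n → ℝ) : E :=
  fderiv ℝ f p (Pi.single α 1)

/-- The complexified differentiated field `ψ_α = ⟨v, ∂_α S⟩ + i ⟨w, ∂_α S⟩`. -/
noncomputable def framePsi {n : ℕ} (S v w : (Fin n → ℝ) → Fin 3 → ℝ) (α : Fin n)
    (p : Fin n → ℝ) : ℂ :=
  ((v p ⬝ᵥ pd S α p : ℝ) : ℂ) + Complex.I * ((w p ⬝ᵥ pd S α p : ℝ) : ℂ)

/-- The real connection coefficient `A_α = ⟨w, ∂_α v⟩`. -/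
noncomputable def frameA {n : ℕ} (v w : (Fin n → ℝ) → Fin 3 → ℝ) (α : Fin n)
    (p : Fin n → ℝ) : ℝ :=
  w p ⬝ᵥ pd v α p

section PartialDerivatives

variable {n : ℕ} {E F G : Type*}
  [NormedAddCommGroup E] [NormedSpace ℝ E]
  [NormedAddCommGroup F] [NormedSpace ℝ F]
  [NormedAddCommGroup G] [NormedSpace ℝ G]
  {f : (Fin n → ℝ) → E} {g : (Fin n → ℝ) → F} {p : Fin n → ℝ}

theorem ContDiff.differentiable_pd (hf : ContDiff ℝ 2 f) (α : Fin n) :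
    Differentiable ℝ (pd f α) :=
  ((hf.fderiv_right (m := 1) (by norm_num)).differentiable (by norm_num)).clm_apply
    (differentiable_const _)

theorem ContDiff.pd_pd_comm (hf : ContDiff ℝ 2 f) (α β : Fin n) (p : Fin n → ℝ) :
    pd (pd f α) β p = pd (pd f β) α p := by
  have hf' : Differentiable ℝ (fderiv ℝ f) :=
    (hf.fderiv_right (m := 1) (by norm_num)).differentiable (by norm_num)
  change fderiv ℝ (fun q => fderiv ℝ f q (Pi.single α 1)) p (Pi.single β 1)
    = fderiv ℝ (fun q => fderiv ℝ f q (Pi.single β 1)) p (Pi.single α 1)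
  rw [fderiv_clm_apply (hf' p) (differentiableAt_const _),
    fderiv_clm_apply (hf' p) (differentiableAt_const _)]
  simpa using hf.contDiffAt.isSymmSndFDerivAt (by simp) (Pi.single β 1) (Pi.single α 1)

variable [FiniteDimensional ℝ E] [FiniteDimensional ℝ F]

theorem LinearMap.differentiableAt_apply₂ (B : E →ₗ[ℝ] F →ₗ[ℝ] G)
    (hf : DifferentiableAt ℝ f p) (hg : DifferentiableAt ℝ g p) :
    DifferentiableAt ℝ (fun q => B (f q) (g q)) p :=
  (B.toContinuousBilinearMap.hasFDerivAt_of_bilinear hf.hasFDerivAt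
    hg.hasFDerivAt).differentiableAt

theorem LinearMap.pd_apply₂ (B : E →ₗ[ℝ] F →ₗ[ℝ] G)
    (hf : DifferentiableAt ℝ f p) (hg : DifferentiableAt ℝ g p) (α : Fin n) :
    pd (fun q => B (f q) (g q)) α p = B (pd f α p) (g p) + B (f p) (pd g α p) := by
  have h := B.toContinuousBilinearMap.hasFDerivAt_of_bilinear hf.hasFDerivAt hg.hasFDerivAt
  simp only [LinearMap.toContinuousBilinearMap_apply] at h
  simp [pd, h.fderiv, add_comm]

end PartialDerivatives

section DotProduct

variable {n : ℕ} {ι : Type*} [Fintype ι] {f g : (Fin n → ℝ) → ι → ℝ} {p : Fin n → ℝ}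

theorem pd_dotProduct (hf : DifferentiableAt ℝ f p) (hg : DifferentiableAt ℝ g p)
    (α : Fin n) : pd (fun q => f q ⬝ᵥ g q) α p = pd f α p ⬝ᵥ g p + f p ⬝ᵥ pd g α p :=
  (dotProductBilin ℝ ℝ).pd_apply₂ hf hg α

theorem pd_dotProduct_add_eq_zero_of_const {c : ℝ} (hfg : ∀ q, f q ⬝ᵥ g q = c)
    (hf : DifferentiableAt ℝ f p) (hg : DifferentiableAt ℝ g p) (α : Fin n) :
    pd f α p ⬝ᵥ g p + f p ⬝ᵥ pd g α p = 0 := by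
  rw [← pd_dotProduct hf hg, funext hfg]
  simp [pd]

theorem dotProduct_pd_self_eq_zero_of_const {c : ℝ} (hf : ∀ q, f q ⬝ᵥ f q = c)
    (hfd : DifferentiableAt ℝ f p) (α : Fin n) : f p ⬝ᵥ pd f α p = 0 := by
  have h := pd_dotProduct_add_eq_zero_of_const hf hfd hfd α
  rw [dotProduct_comm] at h
  linarith

end DotProduct

section CrossProduct

variable {R : Type*} [CommRing R]

theorem cross_eq_smul_of_dotProduct_eq_zero {u x y : Fin 3 → R} (hu : u ⬝ᵥ u = 1)
    (hx : u ⬝ᵥ x = 0) (hy : u ⬝ᵥ y = 0) : x ⨯₃ y = (u ⬝ᵥ x ⨯₃ y) • u := by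
  have h : u ⨯₃ (x ⨯₃ y) = 0 := by
    rw [cross_cross_eq_smul_sub_smul', hy, dotProduct_comm, hx, zero_smul, zero_smul, sub_zero]
  have := cross_cross_eq_smul_sub_smul' u u (x ⨯₃ y)
  rw [h, map_zero, hu, one_smul, eq_comm, sub_eq_zero] at this
  exact this.symm

theorem dotProduct_cross_eq_zero_of_dotProduct_eq_zero {u x y z : Fin 3 → R}
    (hu : u ⬝ᵥ u = 1) (hx : u ⬝ᵥ x = 0) (hy : u ⬝ᵥ y = 0) (hz : u ⬝ᵥ z = 0) :
    x ⬝ᵥ y ⨯₃ z = 0 := by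
  rw [cross_eq_smul_of_dotProduct_eq_zero hu hy hz, dotProduct_smul, dotProduct_comm x u, hx,
    smul_zero]

theorem dotProduct_cross_eq_of_orthonormal {S v : Fin 3 → R} (hv : v ⬝ᵥ v = 1)
    (hSv : S ⬝ᵥ v = 0) (a b : Fin 3 → R) :
    S ⬝ᵥ a ⨯₃ b = (v ⬝ᵥ a) * (S ⨯₃ v ⬝ᵥ b) - (v ⬝ᵥ b) * (S ⨯₃ v ⬝ᵥ a) := by
  have hS : v ⨯₃ (S ⨯₃ v) = S := by
    rw [cross_cross_eq_smul_sub_smul', hv, hSv, one_smul, zero_smul, sub_zero]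
  conv_lhs => rw [← hS]
  exact cross_dot_cross _ _ _ _

/-- Pointwise form of `⟨∂₂w, ∂₁v⟩ = ⟨v, ∂₁S⟩ ⟨w, ∂₂S⟩` for `w = S × v`, with `a, b = ∂₁S, ∂₂S`
and `c, d = ∂₁v, ∂₂v`. -/
theorem cross_add_cross_dotProduct_of_orthonormal {S v a b c d : Fin 3 → R}
    (hS : S ⬝ᵥ S = 1) (hv : v ⬝ᵥ v = 1) (hSv : S ⬝ᵥ v = 0) (hb : S ⬝ᵥ b = 0)
    (hc : v ⬝ᵥ c = 0) (hd : v ⬝ᵥ d = 0) (hac : a ⬝ᵥ v + S ⬝ᵥ c = 0) :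
    (b ⨯₃ v + S ⨯₃ d) ⬝ᵥ c = (v ⬝ᵥ a) * (S ⨯₃ v ⬝ᵥ b) := by
  have hbv : b ⨯₃ v = -(S ⨯₃ v ⬝ᵥ b) • S := by
    rw [cross_eq_smul_of_dotProduct_eq_zero hS hb hSv, triple_product_permutation,
      ← cross_anticomm, dotProduct_neg, dotProduct_comm]
  have hSdc : S ⨯₃ d ⬝ᵥ c = 0 := by
    rw [dotProduct_comm]
    exact dotProduct_cross_eq_zero_of_dotProduct_eq_zero hv hc (by rwa [dotProduct_comm]) hd
  rw [add_dotProduct, hSdc, hbv, smul_dotProduct, smul_eq_mul, dotProduct_comm v a]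
  linear_combination -(S ⨯₃ v ⬝ᵥ b) * hac

end CrossProduct

theorem topological_charge_density_general {n : ℕ}
    (S v : (Fin n → ℝ) → Fin 3 → ℝ)
    (hS : ContDiff ℝ 2 S) (hv : ContDiff ℝ 2 v)
    (hS1 : ∀ p, S p ⬝ᵥ S p = 1) (hv1 : ∀ p, v p ⬝ᵥ v p = 1)
    (hSv : ∀ p, S p ⬝ᵥ v p = 0)
    (w : (Fin n → ℝ) → Fin 3 → ℝ) (hw : ∀ p, w p = crossProduct (S p) (v p))
    (i₁ i₂ : Fin n) :
    ∀ p : Fin n → ℝ,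
      S p ⬝ᵥ crossProduct (pd S i₁ p) (pd S i₂ p) =
          (framePsi S v w i₂ p * (starRingEnd ℂ) (framePsi S v w i₁ p)).im ∧
      (framePsi S v w i₂ p * (starRingEnd ℂ) (framePsi S v w i₁ p)).im =
          pd (frameA v w i₁) i₂ p - pd (frameA v w i₂) i₁ p := by
  intro p
  have hSd : Differentiable ℝ S := hS.differentiable (by norm_num)
  have hvd : Differentiable ℝ v := hv.differentiable (by norm_num)
  have hwd : DifferentiableAt ℝ w p := by
    rw [funext hw]
    exact crossProduct.differentiableAt_apply₂ (hSd p) (hvd p)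
  have hpd_w (α : Fin n) : pd w α p = pd S α p ⨯₃ v p + S p ⨯₃ pd v α p := by
    rw [funext hw]
    exact crossProduct.pd_apply₂ (hSd p) (hvd p) α
  have hpd_A (α β : Fin n) :
      pd (frameA v w α) β p = pd w β p ⬝ᵥ pd v α p + w p ⬝ᵥ pd (pd v α) β p :=
    pd_dotProduct hwd (hv.differentiable_pd α p) β
  have hS_pdS := dotProduct_pd_self_eq_zero_of_const hS1 (hSd p)
  have hv_pdv := dotProduct_pd_self_eq_zero_of_const hv1 (hvd p)
  have hpd_Sv := pd_dotProduct_add_eq_zero_of_const hSv (hSd p) (hvd p)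
  have hIm : (framePsi S v w i₂ p * (starRingEnd ℂ) (framePsi S v w i₁ p)).im
      = (v p ⬝ᵥ pd S i₁ p) * (w p ⬝ᵥ pd S i₂ p) - (v p ⬝ᵥ pd S i₂ p) * (w p ⬝ᵥ pd S i₁ p) := by
    simp only [framePsi, Complex.mul_im, Complex.conj_re, Complex.conj_im, Complex.add_re,
      Complex.add_im, Complex.mul_re, Complex.ofReal_re, Complex.ofReal_im, Complex.I_re,
      Complex.I_im]
    ring
  refine ⟨by rw [hIm, hw p]; exact dotProduct_cross_eq_of_orthonormal (hv1 p) (hSv p) _ _, ?_⟩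
  rw [hIm, hpd_A, hpd_A, hv.pd_pd_comm i₁ i₂, hpd_w, hpd_w,
    cross_add_cross_dotProduct_of_orthonormal (hS1 p) (hv1 p) (hSv p) (hS_pdS i₂) (hv_pdv i₁)
      (hv_pdv i₂) (hpd_Sv i₁),
    cross_add_cross_dotProduct_of_orthonormal (hS1 p) (hv1 p) (hSv p) (hS_pdS i₁) (hv_pdv i₂)
      (hv_pdv i₁) (hpd_Sv i₂), hw p]
  ring

/-- Topological charge density identity:
`⟨S, ∂₁S × ∂₂S⟩ = Im(ψ₂ conj(ψ₁)) = ∂₂ A₁ − ∂₁ A₂`. -/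
theorem topological_charge_density {n : ℕ} (hn : 2 ≤ n)
    (S v : (Fin n → ℝ) → Fin 3 → ℝ)
    (hS : ContDiff ℝ 2 S) (hv : ContDiff ℝ 2 v)
    (hS1 : ∀ p, S p ⬝ᵥ S p = 1) (hv1 : ∀ p, v p ⬝ᵥ v p = 1)
    (hSv : ∀ p, S p ⬝ᵥ v p = 0)
    (w : (Fin n → ℝ) → Fin 3 → ℝ) (hw : ∀ p, w p = crossProduct (S p) (v p))
    (i₁ i₂ : Fin n) (hi₁ : (i₁ : ℕ) = 0) (hi₂ : (i₂ : ℕ) = 1) :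
    ∀ p : Fin n → ℝ,
      S p ⬝ᵥ crossProduct (pd S i₁ p) (pd S i₂ p) =
          (framePsi S v w i₂ p * (starRingEnd ℂ) (framePsi S v w i₁ p)).im ∧
      (framePsi S v w i₂ p * (starRingEnd ℂ) (framePsi S v w i₁ p)).im =
          pd (frameA v w i₁) i₂ p - pd (frameA v w i₂) i₁ p :=
  topological_charge_density_general S v hS hv hS1 hv1 hSv w hw i₁ i₂
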